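/- Let d be an odd prime, n ≥ 1, and consider the system (ℂ^d)^{⊗n} with its Heisenberg–Weyl operators T_{u₁⊕⋯⊕uₙ} = T_{u₁}⊗⋯⊗T_{uₙ} and the corresponding phase-space point operators. If U is a Clifford unitary on (ℂ^d)^{⊗n}, then the pure state U|0⟩⟨0|^{⊗n}U† has nonnegative discrete Wigner function: W_{U|0⟩⟨0|^{⊗n}U†}(u) ≥ 0 for all phase-space points u. Consequently every stabilizer state σ (a convex combination of such pure states) has nonnegative discrete Wigner function and satisfies ‖σ‖_{W,1} = 1. -/

import Mathlib

open Matrix Complex BigOperators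
open scoped ComplexOrder

noncomputable section

namespace Magic

/-- ω = exp(2πi/d) -/
def omegaC (d : ℕ) : ℂ := Complex.exp (2 * Real.pi * Complex.I / d)

/-- τ = exp((d+1)πi/d) -/
def tauC (d : ℕ) : ℂ := Complex.exp ((d + 1) * Real.pi * Complex.I / d)

/-- Shift operator X|j⟩ = |j⊕1⟩. -/
def shiftX (d : ℕ) [NeZero d] : Matrix (ZMod d) (ZMod d) ℂ :=
  Matrix.of fun r c => if r = c + 1 then 1 else 0

/-- Boost operator Z|j⟩ = ω^j |j⟩. -/
def boostZ (d : ℕ) [NeZero d] : Matrix (ZMod d) (ZMod d) ℂ :=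
  Matrix.diagonal fun j => omegaC d ^ j.val

/-- Heisenberg–Weyl operator T_u = τ^{-a₁a₂} Z^{a₁} X^{a₂}. -/
def HW (d : ℕ) [NeZero d] (u : ZMod d × ZMod d) : Matrix (ZMod d) (ZMod d) ℂ :=
  tauC d ^ (-((u.1.val * u.2.val : ℕ) : ℤ)) • (boostZ d ^ u.1.val * shiftX d ^ u.2.val)

/-- A₀ = (1/d) ∑_u T_u. -/
def A0 (d : ℕ) [NeZero d] : Matrix (ZMod d) (ZMod d) ℂ :=
  (d : ℂ)⁻¹ • ∑ u : ZMod d × ZMod d, HW d u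

/-- Phase-space point operators A_u = T_u A₀ T_u†. -/
def Apt (d : ℕ) [NeZero d] (u : ZMod d × ZMod d) : Matrix (ZMod d) (ZMod d) ℂ :=
  HW d u * A0 d * (HW d u)ᴴ

/-- Discrete Wigner function W_V(u) = tr(A_u V)/d. -/
def wig (d : ℕ) [NeZero d] (V : Matrix (ZMod d) (ZMod d) ℂ) (u : ZMod d × ZMod d) : ℂ :=
  (Apt d u * V).trace / d

/-- Wigner trace norm ‖V‖_{W,1} = ∑_u |W_V(u)|. -/
def wnorm1 (d : ℕ) [NeZero d] (V : Matrix (ZMod d) (ZMod d) ℂ) : ℝ :=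
  ∑ u : ZMod d × ZMod d, ‖wig d V u‖

/-- Wigner spectral norm ‖V‖_{W,∞} = d · max_u |W_V(u)|. -/
def wnormInf (d : ℕ) [NeZero d] (V : Matrix (ZMod d) (ZMod d) ℂ) : ℝ :=
  (d : ℝ) * ⨆ u : ZMod d × ZMod d, ‖wig d V u‖

end Magic

namespace Magic

/-- n-fold tensor product of phase-space point operators on (ℂ^d)^{⊗n}. -/
def AptN (d : ℕ) [NeZero d] (n : ℕ) (u : Fin n → ZMod d × ZMod d) :
    Matrix (Fin n → ZMod d) (Fin n → ZMod d) ℂ :=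
  Matrix.of fun r c => ∏ i, Apt d (u i) (r i) (c i)

/-- Discrete Wigner function on (ℂ^d)^{⊗n}. -/
def wigN (d : ℕ) [NeZero d] (n : ℕ) (V : Matrix (Fin n → ZMod d) (Fin n → ZMod d) ℂ)
    (u : Fin n → ZMod d × ZMod d) : ℂ :=
  (AptN d n u * V).trace / ((d : ℂ) ^ n)

/-- Wigner trace norm on (ℂ^d)^{⊗n}. -/
def wnorm1N (d : ℕ) [NeZero d] (n : ℕ)
    (V : Matrix (Fin n → ZMod d) (Fin n → ZMod d) ℂ) : ℝ :=
  ∑ u : Fin n → ZMod d × ZMod d, ‖wigN d n V u‖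

/-- The n-fold tensor power |φ⟩⟨φ|^{⊗n} of the rank-one projector onto φ. -/
def projPow (d : ℕ) [NeZero d] (n : ℕ) (φ : ZMod d → ℂ) :
    Matrix (Fin n → ZMod d) (Fin n → ZMod d) ℂ :=
  Matrix.of fun r c => (∏ i, φ (r i)) * star (∏ i, φ (c i))

/-- n-fold tensor product of Heisenberg–Weyl operators. -/
def HWN (d : ℕ) [NeZero d] (n : ℕ) (u : Fin n → ZMod d × ZMod d) :
    Matrix (Fin n → ZMod d) (Fin n → ZMod d) ℂ :=
  Matrix.of fun r c => ∏ i, HW d (u i) (r i) (c i)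

/-- A Clifford unitary on (ℂ^d)^{⊗n}: a unitary mapping Heisenberg–Weyl operators to
Heisenberg–Weyl operators up to phases under conjugation. -/
def IsCliffordN (d : ℕ) [NeZero d] (n : ℕ)
    (U : Matrix (Fin n → ZMod d) (Fin n → ZMod d) ℂ) : Prop :=
  Uᴴ * U = 1 ∧ U * Uᴴ = 1 ∧
  ∀ u : Fin n → ZMod d × ZMod d, ∃ (θ : ℝ) (u' : Fin n → ZMod d × ZMod d),
    U * HWN d n u * Uᴴ = Complex.exp (θ * Complex.I) • HWN d n u'

/-- The vector |0⟩^{⊗n}. -/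
def ket0N (d : ℕ) [NeZero d] (n : ℕ) : (Fin n → ZMod d) → ℂ :=
  fun r => if r = (fun _ => 0) then 1 else 0

/-- The projector |0⟩⟨0|^{⊗n}. -/
def E00N (d : ℕ) [NeZero d] (n : ℕ) : Matrix (Fin n → ZMod d) (Fin n → ZMod d) ℂ :=
  Matrix.vecMulVec (ket0N d n) (star (ket0N d n))

/-- A stabilizer state on (ℂ^d)^{⊗n}: a convex combination of pure stabilizer states
U|0⟩⟨0|^{⊗n}U† with U Clifford. -/
def IsStabStateN (d : ℕ) [NeZero d] (n : ℕ)
    (σ : Matrix (Fin n → ZMod d) (Fin n → ZMod d) ℂ) : Prop :=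
  ∃ (m : ℕ) (p : Fin m → ℝ) (U : Fin m → Matrix (Fin n → ZMod d) (Fin n → ZMod d) ℂ),
    (∀ j, 0 ≤ p j) ∧ (∑ j, p j = 1) ∧ (∀ j, IsCliffordN d n (U j)) ∧
    σ = ∑ j, (p j : ℂ) • (U j * E00N d n * (U j)ᴴ)

end Magic

/-!
Expanding the projector, `|0⟩⟨0|^{⊗n} = d^{-n} ∑_a T_{(a,0)}`, so the Wigner function of
`U|0⟩⟨0|^{⊗n}U†` at `u` is `d^{-2n} ∑_a tr(A_u U T_{(a,0)} U†)`. The operators `U T_{(a,0)} U†`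
form a commuting representation of `(ℤ_d)^n` by nonzero multiples of Weyl operators, and
`tr(A_u T_v) = e(symp v u)` (with `e = ZMod.stdAddChar`) is a character in `v`. For odd `d`,
commuting Weyl operators multiply without a phase, hence `a ↦ tr(A_u U T_{(a,0)} U†)` is an
additive character of `(ℤ_d)^n`: its sum is `d^n` or `0`, so the Wigner function is `d^{-n}` or
`0`. Nonnegativity passes to convex combinations, and `∑_u A_u = d^n • 1` gives
`‖σ‖_{W,1} = ∑_u W_σ(u) = tr σ = 1`.
-/

theorem AddChar.map_sum_eq_prod {ι A M : Type*} [AddCommMonoid A] [CommMonoid M]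
    (ψ : AddChar A M) (s : Finset ι) (f : ι → A) :
    ψ (∑ i ∈ s, f i) = ∏ i ∈ s, ψ (f i) := by
  induction s using Finset.cons_induction with
  | empty => simp
  | cons i s hi ih => rw [Finset.sum_cons, Finset.prod_cons, AddChar.map_add_eq_mul, ih]

theorem ZMod.star_stdAddChar {N : ℕ} [NeZero N] (x : ZMod N) :
    star (stdAddChar x) = stdAddChar (-x) := by
  rw [stdAddChar_apply, stdAddChar_apply, AddChar.map_neg_eq_inv, Circle.coe_inv_eq_conj]
  rfl

namespace Matrix

variable {ι l m n R : Type*} [Fintype ι] [CommSemiring R]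

def piKronecker (M : ι → Matrix m n R) : Matrix (ι → m) (ι → n) R :=
  of fun r c => ∏ i, M i (r i) (c i)

@[simp]
theorem piKronecker_apply (M : ι → Matrix m n R) (r : ι → m) (c : ι → n) :
    piKronecker M r c = ∏ i, M i (r i) (c i) := rfl

theorem piKronecker_mul [DecidableEq ι] [Fintype m] (M : ι → Matrix l m R)
    (N : ι → Matrix m n R) : piKronecker M * piKronecker N = piKronecker fun i => M i * N i := by
  ext r c
  simp only [mul_apply, piKronecker_apply, ← Finset.prod_mul_distrib, Fintype.prod_sum]

theorem trace_piKronecker [DecidableEq ι] [Fintype m] (M : ι → Matrix m m R) :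
    (piKronecker M).trace = ∏ i, (M i).trace := by
  simp only [trace, diag_apply, piKronecker_apply, Fintype.prod_sum]

theorem piKronecker_smul (a : ι → R) (M : ι → Matrix m n R) :
    piKronecker (fun i => a i • M i) = (∏ i, a i) • piKronecker M := by
  ext r c
  simp only [piKronecker_apply, smul_apply, smul_eq_mul, Finset.prod_mul_distrib]

theorem piKronecker_one [DecidableEq m] : piKronecker (fun _ : ι => (1 : Matrix m m R)) = 1 := by
  ext r c
  simp only [piKronecker_apply, one_apply, Fintype.prod_boole, funext_iff]

theorem piKronecker_single [DecidableEq m] [DecidableEq n] (a : ι → m) (b : ι → n) :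
    piKronecker (fun i => single (a i) (b i) (1 : R)) = single a b 1 := by
  ext r c
  simp only [piKronecker_apply, single_apply, Fintype.prod_boole, funext_iff, forall_and]

theorem sum_piKronecker [DecidableEq ι] {α : Type*} [Fintype α] (M : ι → α → Matrix m n R) :
    ∑ x : ι → α, piKronecker (fun i => M i (x i)) = piKronecker fun i => ∑ a, M i a := by
  ext r c
  simp only [sum_apply, piKronecker_apply, Fintype.prod_sum]

end Matrix

namespace Magic

open ZMod (stdAddChar)

variable {d n : ℕ}

def symp (v w : Fin n → ZMod d × ZMod d) : ZMod d :=
  ∑ i, ((v i).1 * (w i).2 - (w i).1 * (v i).2)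

theorem symp_swap (v w : Fin n → ZMod d × ZMod d) : symp w v = -symp v w := by
  simp only [symp, ← Finset.sum_neg_distrib, neg_sub]

theorem symp_add_left (v v' w : Fin n → ZMod d × ZMod d) :
    symp (v + v') w = symp v w + symp v' w := by
  simp only [symp, ← Finset.sum_add_distrib, Pi.add_apply, Prod.fst_add, Prod.snd_add]
  congr 1; funext i; ring

theorem symp_neg_right_self (v : Fin n → ZMod d × ZMod d) : symp v (-v) = 0 := by
  simp only [symp, Pi.neg_apply, Prod.fst_neg, Prod.snd_neg]
  exact Finset.sum_eq_zero fun i _ => by ring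

/-- The inverse of `2` in `ZMod d` for odd `d`. -/
def half (d : ℕ) : ZMod d := ((d + 1) / 2 : ℕ)

theorem two_mul_half (hodd : Odd d) : 2 * half d = 1 := by
  obtain ⟨k, rfl⟩ := hodd
  have hk : (2 * k + 1 + 1) / 2 = k + 1 := by omega
  have : ((2 * k + 1 : ℕ) : ZMod (2 * k + 1)) = 0 := ZMod.natCast_self _
  rw [half, hk]
  push_cast at this ⊢
  linear_combination this

variable [NeZero d]

theorem omegaC_pow (k : ℕ) : omegaC d ^ k = stdAddChar (k : ZMod d) := by
  rw [ZMod.stdAddChar_apply, ZMod.toCircle_natCast, omegaC, ← Complex.exp_nat_mul]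
  ring_nf

theorem tauC_eq (hodd : Odd d) : tauC d = stdAddChar (half d) := by
  obtain ⟨k, hk⟩ := hodd
  have h2 : (d + 1) / 2 = k + 1 := by omega
  rw [half, h2, ZMod.stdAddChar_apply, ZMod.toCircle_natCast, tauC, hk]
  push_cast
  ring_nf

theorem tauC_zpow (hodd : Odd d) (m : ℤ) : tauC d ^ m = stdAddChar ((m : ZMod d) * half d) := by
  rw [tauC_eq hodd, ← AddChar.map_zsmul_eq_zpow, zsmul_eq_mul]

theorem shiftX_pow_apply (b : ℕ) (r c : ZMod d) :
    (shiftX d ^ b) r c = if r = c + b then 1 else 0 := by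
  induction b generalizing c with
  | zero => simp [Matrix.one_apply]
  | succ b ih =>
    simp only [pow_succ, Matrix.mul_apply, ih]
    simp [shiftX, add_assoc, add_comm (1 : ZMod d)]

theorem boostZ_pow (a : ℕ) :
    boostZ d ^ a = Matrix.diagonal fun j => stdAddChar ((a : ZMod d) * j) := by
  rw [boostZ, Matrix.diagonal_pow]
  congr 1
  funext j
  rw [Pi.pow_apply, omegaC_pow, ← AddChar.map_nsmul_eq_pow, nsmul_eq_mul]
  simp [mul_comm]

theorem HW_apply (hodd : Odd d) (u : ZMod d × ZMod d) (r c : ZMod d) :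
    HW d u r c = if r = c + u.2 then stdAddChar (u.1 * r - half d * (u.1 * u.2)) else 0 := by
  rw [HW, boostZ_pow, Matrix.smul_apply, Matrix.diagonal_mul, shiftX_pow_apply, tauC_zpow hodd]
  push_cast [ZMod.natCast_val, ZMod.cast_id', id, smul_eq_mul, mul_ite, mul_one, mul_zero,
    ← AddChar.map_add_eq_mul]
  congr 2
  ring

theorem HW_mul (hodd : Odd d) (u v : ZMod d × ZMod d) :
    HW d u * HW d v = stdAddChar (half d * (u.1 * v.2 - v.1 * u.2)) • HW d (u + v) := by
  ext r c
  simp only [Matrix.mul_apply, Matrix.smul_apply, HW_apply hodd, mul_ite, ite_mul, zero_mul,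
    mul_zero, Finset.sum_ite_eq', Finset.mem_univ, if_true, Prod.fst_add, Prod.snd_add,
    smul_eq_mul, ← AddChar.map_add_eq_mul, add_assoc]
  split_ifs with h₁ h₂ h₂
  · congr 1
    subst r
    linear_combination (v.1 * u.2) * two_mul_half hodd
  · exact absurd (h₁.trans (by ring)) h₂
  · exact absurd (h₂.trans (by ring)) h₁
  · rfl

theorem A0_apply (hodd : Odd d) (r c : ZMod d) : A0 d r c = if r + c = 0 then 1 else 0 := by
  have hpick (a : ZMod d) :
      ∑ b : ZMod d, HW d (a, b) r c = stdAddChar (a * (half d * (r + c))) := by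
    have hcond (b : ZMod d) : r = c + b ↔ b = r - c := by rw [eq_sub_iff_add_eq', eq_comm]
    simp only [HW_apply hodd, hcond, Finset.sum_ite_eq', Finset.mem_univ, if_true]
    congr 1
    linear_combination (-(a * r)) * two_mul_half hodd
  have hhalf : half d * (r + c) = 0 ↔ r + c = 0 := by
    constructor <;> intro h
    · linear_combination 2 * h - (r + c) * two_mul_half hodd
    · rw [h, mul_zero]
  simp only [A0, Matrix.smul_apply, Matrix.sum_apply, Fintype.sum_prod_type, hpick,
    AddChar.sum_mulShift _ (ZMod.isPrimitive_stdAddChar d), hhalf, ZMod.card, smul_eq_mul]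
  split_ifs <;> simp

theorem mul_A0_apply (hodd : Odd d) (M : Matrix (ZMod d) (ZMod d) ℂ) (r c : ZMod d) :
    (M * A0 d) r c = M r (-c) := by
  simp only [Matrix.mul_apply, A0_apply hodd, add_eq_zero_iff_eq_neg, mul_ite, mul_one, mul_zero,
    Finset.sum_ite_eq', Finset.mem_univ, if_true]

theorem Apt_apply (hodd : Odd d) (u : ZMod d × ZMod d) (r c : ZMod d) :
    Apt d u r c = if r + c = 2 * u.2 then stdAddChar (u.1 * (r - c)) else 0 := by
  have hcol (k : ZMod d) : c = k + u.2 ↔ k = c - u.2 := by rw [eq_sub_iff_add_eq, eq_comm]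
  have hrow : r = -(c - u.2) + u.2 ↔ r + c = 2 * u.2 := by
    constructor <;> intro h <;> linear_combination h
  simp only [Apt, Matrix.mul_apply (M := HW d u * A0 d), mul_A0_apply hodd,
    Matrix.conjTranspose_apply, HW_apply hodd, hcol, apply_ite star, star_zero,
    ZMod.star_stdAddChar, mul_ite, ite_mul, mul_zero, zero_mul, Finset.sum_ite_eq',
    Finset.mem_univ, if_true, hrow, ← AddChar.map_add_eq_mul]
  split_ifs
  · congr 1; ring
  · rfl

theorem trace_Apt_mul_HW (hodd : Odd d) (u v : ZMod d × ZMod d) :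
    (Apt d u * HW d v).trace = stdAddChar (v.1 * u.2 - u.1 * v.2) := by
  have hrow (r : ZMod d) : r + (r + v.2) = 2 * u.2 ↔ r = u.2 - half d * v.2 := by
    constructor <;> intro h
    · linear_combination half d * h - (r - u.2) * two_mul_half hodd
    · linear_combination 2 * h - v.2 * two_mul_half hodd
  simp only [Matrix.trace, Matrix.diag_apply, Matrix.mul_apply, HW_apply hodd, Apt_apply hodd,
    mul_ite, ite_mul, mul_zero, zero_mul, Finset.sum_ite_eq', Finset.mem_univ, if_true, hrow,
    ← AddChar.map_add_eq_mul]
  congr 1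
  linear_combination -(v.1 * v.2) * two_mul_half hodd

theorem sum_Apt (hodd : Odd d) : ∑ u, Apt d u = (d : ℂ) • 1 := by
  have hcol (r c b : ZMod d) : r + c = 2 * b ↔ b = half d * (r + c) := by
    constructor <;> intro h
    · linear_combination -(half d) * h - b * two_mul_half hodd
    · linear_combination -2 * h - (r + c) * two_mul_half hodd
  ext r c
  simp only [Matrix.sum_apply, Fintype.sum_prod_type, Apt_apply hodd, hcol, Finset.sum_ite_eq',
    Finset.mem_univ, if_true, AddChar.sum_mulShift _ (ZMod.isPrimitive_stdAddChar d),
    sub_eq_zero, ZMod.card, Matrix.smul_apply, Matrix.one_apply, smul_eq_mul]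
  split_ifs <;> simp

theorem sum_HW_mk_zero (hodd : Odd d) : ∑ a, HW d (a, 0) = (d : ℂ) • Matrix.single 0 0 1 := by
  ext r c
  simp only [Matrix.sum_apply, HW_apply hodd, add_zero, mul_zero, sub_zero, Finset.sum_ite_irrel,
    Finset.sum_const_zero, AddChar.sum_mulShift _ (ZMod.isPrimitive_stdAddChar d), ZMod.card,
    Matrix.smul_apply, Matrix.single_apply, smul_eq_mul]
  rcases eq_or_ne r c with rfl | hrc
  · rcases eq_or_ne r 0 with rfl | hr
    · simp
    · simp [hr, Ne.symm hr]
  · rw [if_neg hrc, if_neg fun h => hrc (h.1.symm.trans h.2), mul_zero]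

theorem HW_zero (hodd : Odd d) : HW d 0 = 1 := by
  ext r c
  simp [HW_apply hodd, Matrix.one_apply]

theorem HWN_eq_piKronecker (v : Fin n → ZMod d × ZMod d) :
    HWN d n v = piKronecker fun i => HW d (v i) := rfl

theorem AptN_eq_piKronecker (u : Fin n → ZMod d × ZMod d) :
    AptN d n u = piKronecker fun i => Apt d (u i) := rfl

theorem HWN_zero (hodd : Odd d) : HWN d n 0 = 1 := by
  simp only [HWN_eq_piKronecker, Pi.zero_apply, HW_zero hodd, Matrix.piKronecker_one]

theorem HWN_mul (hodd : Odd d) (v w : Fin n → ZMod d × ZMod d) :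
    HWN d n v * HWN d n w = stdAddChar (half d * symp v w) • HWN d n (v + w) := by
  simp only [HWN_eq_piKronecker, Matrix.piKronecker_mul, HW_mul hodd, Matrix.piKronecker_smul,
    symp, Finset.mul_sum, AddChar.map_sum_eq_prod, Pi.add_apply]

theorem HWN_ne_zero (hodd : Odd d) (v : Fin n → ZMod d × ZMod d) : HWN d n v ≠ 0 := by
  intro h
  have := HWN_mul hodd v (-v)
  rw [h, zero_mul, symp_neg_right_self, add_neg_cancel, HWN_zero hodd, mul_zero,
    AddChar.map_zero_eq_one, one_smul] at this
  exact zero_ne_one this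

/-- The phases of `T_v T_w` and `T_w T_v` are `e(±half d * symp v w)`; since `d` is odd, their
equality forces `symp v w = 0`. -/
theorem HWN_mul_of_commute (hodd : Odd d) {v w : Fin n → ZMod d × ZMod d}
    (h : Commute (HWN d n v) (HWN d n w)) : HWN d n v * HWN d n w = HWN d n (v + w) := by
  have hphase := h.eq
  rw [HWN_mul hodd, HWN_mul hodd, add_comm w, symp_swap v w] at hphase
  have hsymp : symp v w = 0 := by
    have := ZMod.injective_stdAddChar (smul_left_injective ℂ (HWN_ne_zero hodd _) hphase)
    linear_combination this - symp v w * two_mul_half hodd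
  rw [HWN_mul hodd, hsymp, mul_zero, AddChar.map_zero_eq_one, one_smul]

theorem trace_AptN_mul_HWN (hodd : Odd d) (u v : Fin n → ZMod d × ZMod d) :
    (AptN d n u * HWN d n v).trace = stdAddChar (symp v u) := by
  simp only [AptN_eq_piKronecker, HWN_eq_piKronecker, Matrix.piKronecker_mul,
    Matrix.trace_piKronecker, trace_Apt_mul_HW hodd, symp, AddChar.map_sum_eq_prod]

theorem trace_AptN (hodd : Odd d) (u : Fin n → ZMod d × ZMod d) : (AptN d n u).trace = 1 := by
  simpa [HWN_zero hodd, symp] using trace_AptN_mul_HWN hodd u 0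

theorem sum_AptN (hodd : Odd d) : ∑ u, AptN d n u = ((d : ℂ) ^ n) • 1 := by
  simp only [AptN_eq_piKronecker, Matrix.sum_piKronecker fun _ => Apt d, sum_Apt hodd,
    Matrix.piKronecker_smul, Matrix.piKronecker_one, Finset.prod_const, Finset.card_univ,
    Fintype.card_fin]

theorem E00N_eq_single : E00N d n = Matrix.single 0 0 1 := by
  ext r c
  simp only [E00N, Matrix.vecMulVec_apply, ket0N, ← Pi.zero_def, Pi.star_apply, RCLike.star_def,
    MonoidWithZeroHom.map_ite_one_zero, mul_ite, mul_one, mul_zero, Matrix.single_apply,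
    eq_comm (b := r), eq_comm (b := c), ite_and]
  split_ifs <;> rfl

theorem E00N_eq_sum_HWN (hodd : Odd d) :
    E00N d n = ((d : ℂ) ^ n)⁻¹ • ∑ a : Fin n → ZMod d, HWN d n fun i => (a i, 0) := by
  have hd : (d : ℂ) ^ n ≠ 0 := pow_ne_zero _ (Nat.cast_ne_zero.2 (NeZero.ne d))
  simp only [HWN_eq_piKronecker, Matrix.sum_piKronecker fun _ a => HW d (a, 0), sum_HW_mk_zero hodd,
    Matrix.piKronecker_smul, Matrix.piKronecker_single, Finset.prod_const, Finset.card_univ,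
    Fintype.card_fin, smul_smul, inv_mul_cancel₀ hd, one_smul, E00N_eq_single]
  rfl

theorem HWN_mk_zero_mul (hodd : Odd d) (a b : Fin n → ZMod d) :
    (HWN d n fun i => (a i, 0)) * (HWN d n fun i => (b i, 0)) =
      HWN d n fun i => ((a + b) i, 0) := by
  rw [HWN_mul hodd]
  simp only [symp, mul_zero, sub_zero, Finset.sum_const_zero, AddChar.map_zero_eq_one, one_smul]
  congr 1
  ext i <;> simp

theorem trace_AptN_mul_mul (hodd : Odd d) (u : Fin n → ZMod d × ZMod d)
    {S S' : Matrix (Fin n → ZMod d) (Fin n → ZMod d) ℂ}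
    (hS : ∃ c : ℂ, c ≠ 0 ∧ ∃ v, S = c • HWN d n v)
    (hS' : ∃ c : ℂ, c ≠ 0 ∧ ∃ v, S' = c • HWN d n v)
    (h : Commute S S') :
    (AptN d n u * (S * S')).trace = (AptN d n u * S).trace * (AptN d n u * S').trace := by
  obtain ⟨c, hc, v, rfl⟩ := hS
  obtain ⟨c', hc', w, rfl⟩ := hS'
  rw [Commute.smul_left_iff₀ hc, Commute.smul_right_iff₀ hc'] at h
  simp only [Matrix.smul_mul, Matrix.mul_smul, HWN_mul_of_commute hodd h, Matrix.trace_smul,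
    trace_AptN_mul_HWN hodd, symp_add_left, AddChar.map_add_eq_mul, smul_eq_mul]
  ring

theorem wigN_conj_E00N_nonneg (hodd : Odd d) {V : Matrix (Fin n → ZMod d) (Fin n → ZMod d) ℂ}
    (hV : IsCliffordN d n V) (u : Fin n → ZMod d × ZMod d) :
    0 ≤ wigN d n (V * E00N d n * Vᴴ) u := by
  obtain ⟨hVV, hVV', hconj⟩ := hV
  let s (a : Fin n → ZMod d) := V * HWN d n (fun i => (a i, 0)) * Vᴴ
  have hs_add (a b : Fin n → ZMod d) : s (a + b) = s a * s b := by
    simp only [s, ← HWN_mk_zero_mul hodd, mul_assoc]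
    rw [← mul_assoc Vᴴ V, hVV, one_mul]
  have hs_weyl (a : Fin n → ZMod d) : ∃ c : ℂ, c ≠ 0 ∧ ∃ v, s a = c • HWN d n v := by
    obtain ⟨θ, v, h⟩ := hconj fun i => (a i, 0)
    exact ⟨_, Complex.exp_ne_zero _, v, h⟩
  let ψ : AddChar (Fin n → ZMod d) ℂ :=
    { toFun a := (AptN d n u * s a).trace
      map_zero_eq_one' := by
        simp only [s, Pi.zero_apply, Prod.mk_zero_zero, ← Pi.zero_def, HWN_zero hodd, mul_one,
          hVV', trace_AptN hodd]
      map_add_eq_mul' a b := by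
        rw [hs_add]
        exact trace_AptN_mul_mul hodd u (hs_weyl a) (hs_weyl b)
          (by rw [Commute, SemiconjBy, ← hs_add, ← hs_add, add_comm]) }
  have hwig : wigN d n (V * E00N d n * Vᴴ) u = ((d : ℂ) ^ n)⁻¹ * (∑ a, ψ a) / (d : ℂ) ^ n := by
    rw [wigN, E00N_eq_sum_HWN hodd, Matrix.mul_smul, Matrix.smul_mul, Matrix.mul_sum,
      Matrix.sum_mul, Matrix.mul_smul, Matrix.trace_smul, Matrix.mul_sum, Matrix.trace_sum,
      smul_eq_mul]
    rfl
  rw [hwig, AddChar.sum_eq_ite]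
  split_ifs <;> positivity

theorem wigN_sum_smul {ι : Type*} [Fintype ι] (c : ι → ℂ)
    (M : ι → Matrix (Fin n → ZMod d) (Fin n → ZMod d) ℂ) (u : Fin n → ZMod d × ZMod d) :
    wigN d n (∑ j, c j • M j) u = ∑ j, c j * wigN d n (M j) u := by
  simp only [wigN, Matrix.mul_sum, Matrix.mul_smul, Matrix.trace_sum, Matrix.trace_smul,
    smul_eq_mul, Finset.sum_div, mul_div_assoc]

theorem sum_wigN (hodd : Odd d) (V : Matrix (Fin n → ZMod d) (Fin n → ZMod d) ℂ) :
    ∑ u, wigN d n V u = V.trace := by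
  have hd : (d : ℂ) ^ n ≠ 0 := pow_ne_zero _ (Nat.cast_ne_zero.2 (NeZero.ne d))
  simp only [wigN, ← Finset.sum_div, ← Matrix.trace_sum, ← Matrix.sum_mul, sum_AptN hodd,
    Matrix.smul_mul, one_mul, Matrix.trace_smul, smul_eq_mul, mul_div_cancel_left₀ _ hd]

theorem wnorm1N_eq_trace (hodd : Odd d) {V : Matrix (Fin n → ZMod d) (Fin n → ZMod d) ℂ}
    (hV : ∀ u, 0 ≤ wigN d n V u) : (wnorm1N d n V : ℂ) = V.trace := by
  rw [wnorm1N, Complex.ofReal_sum, ← sum_wigN hodd]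
  exact Finset.sum_congr rfl fun u _ => Complex.norm_of_nonneg' (hV u)

namespace IsStabStateN

variable {σ : Matrix (Fin n → ZMod d) (Fin n → ZMod d) ℂ}

theorem wigN_nonneg (hodd : Odd d) (hσ : IsStabStateN d n σ) (u : Fin n → ZMod d × ZMod d) :
    0 ≤ wigN d n σ u := by
  obtain ⟨m, p, V, hp, -, hV, rfl⟩ := hσ
  rw [wigN_sum_smul]
  exact Finset.sum_nonneg fun j _ =>
    mul_nonneg (Complex.zero_le_real.2 (hp j)) (wigN_conj_E00N_nonneg hodd (hV j) u)

theorem trace_eq_one (hσ : IsStabStateN d n σ) : σ.trace = 1 := by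
  obtain ⟨m, p, V, -, hp, hV, rfl⟩ := hσ
  simp only [Matrix.trace_sum, Matrix.trace_smul, Matrix.trace_mul_cycle, (hV _).1, one_mul,
    E00N_eq_single, Matrix.trace_single_eq_same, smul_eq_mul, mul_one]
  exact_mod_cast hp

end IsStabStateN

end Magic

namespace Magic

theorem clifford_state_wigner_nonneg_general (d : ℕ) [NeZero d] (hodd : Odd d)
    (n : ℕ)
    (U : Matrix (Fin n → ZMod d) (Fin n → ZMod d) ℂ) (hU : IsCliffordN d n U) :
    (∀ u : Fin n → ZMod d × ZMod d,
      ∃ x : ℝ, 0 ≤ x ∧ wigN d n (U * E00N d n * Uᴴ) u = (x : ℂ)) ∧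
    (∀ σ : Matrix (Fin n → ZMod d) (Fin n → ZMod d) ℂ, IsStabStateN d n σ →
      (∀ u : Fin n → ZMod d × ZMod d, ∃ x : ℝ, 0 ≤ x ∧ wigN d n σ u = (x : ℂ)) ∧
      wnorm1N d n σ = 1) := by
  have ofReal_of_nonneg {z : ℂ} (hz : 0 ≤ z) : ∃ x : ℝ, 0 ≤ x ∧ z = x :=
    ⟨‖z‖, norm_nonneg z, (Complex.norm_of_nonneg' hz).symm⟩
  refine ⟨fun u => ofReal_of_nonneg (wigN_conj_E00N_nonneg hodd hU u), fun σ hσ => ?_⟩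
  refine ⟨fun u => ofReal_of_nonneg (hσ.wigN_nonneg hodd u), ?_⟩
  exact_mod_cast (wnorm1N_eq_trace hodd (hσ.wigN_nonneg hodd)).trans hσ.trace_eq_one

/-- For a Clifford unitary U on (ℂ^d)^{⊗n}, the pure state U|0⟩⟨0|^{⊗n}U†
has nonnegative discrete Wigner function; consequently every stabilizer state has nonnegative
discrete Wigner function and unit Wigner trace norm. -/
theorem clifford_state_wigner_nonneg (d : ℕ) [NeZero d] (hd : Nat.Prime d) (hodd : Odd d)
    (n : ℕ) (hn : 1 ≤ n)
    (U : Matrix (Fin n → ZMod d) (Fin n → ZMod d) ℂ) (hU : IsCliffordN d n U) :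
    (∀ u : Fin n → ZMod d × ZMod d,
      ∃ x : ℝ, 0 ≤ x ∧ wigN d n (U * E00N d n * Uᴴ) u = (x : ℂ)) ∧
    (∀ σ : Matrix (Fin n → ZMod d) (Fin n → ZMod d) ℂ, IsStabStateN d n σ →
      (∀ u : Fin n → ZMod d × ZMod d, ∃ x : ℝ, 0 ≤ x ∧ wigN d n σ u = (x : ℂ)) ∧
      wnorm1N d n σ = 1) :=
  clifford_state_wigner_nonneg_general d hodd n U hU

end Magic
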